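/- arXiv:2510.05944 — 2 statements merged into one kernel-verified Lean document; each statement's English description precedes it below -/
import Mathlib

section
/- Let G = (V, E) be a finite simple graph with |V| ≥ 2. There exist two unimodal functions f_1, f_2 : V → ℝ≥0 with f_1(v) + f_2(v) = 1 for every v ∈ V if and only if V can be partitioned into two disjoint subsets V_1, V_2 with V_1 ∪ V_2 = V such that the induced subgraphs G(V_1) and G(V_2) are both trees. -/
/-!
Let `M` be the maximum of `f₁`. If `f₁` is not constant, `{f₁ ≥ M}` is a positive superlevel set
of `f₁`, and its complement `{f₁ < M}` is the strict superlevel set `{f₂ > 1 - M}` of `f₂`; on a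
finite graph a strict superlevel set is an ordinary one, taken at the least value above the
threshold. So both parts induce trees. If `f₁` is constant, the whole vertex set is a superlevel set
of `f₁` or of `f₂`, so `G` is a tree, and a leaf together with the rest of the tree is the
partition. Conversely, the indicator functions of the two parts of a partition are unimodal.
-/

open SimpleGraph

/-- A set of vertices induces a tree in `G`. -/
def InducesTree {V : Type*} (G : SimpleGraph V) (S : Set V) : Prop :=
  (G.induce S).IsTree

/-- `f` is unimodal on `G`: every positive superlevel set is empty or induces a tree. -/
def UnimodalOn {V : Type*} (G : SimpleGraph V) (f : V → NNReal) : Prop :=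
  ∀ c : NNReal, 0 < c → {v | c ≤ f v} = ∅ ∨ InducesTree G {v | c ≤ f v}

lemma lt_iff_lt_of_add_eq_add {α : Type*} [AddCommMonoid α] [LinearOrder α]
    [IsOrderedCancelAddMonoid α] {a b c d : α} (h : a + b = c + d) : a < c ↔ d < b := by
  constructor <;> intro hlt <;> by_contra! hle
  · exact (add_lt_add_of_lt_of_le hlt hle).ne h
  · exact (add_lt_add_of_le_of_lt hle hlt).ne' h

section

variable {V : Type*} {G : SimpleGraph V}

lemma inducesTree_singleton (v : V) : InducesTree G {v} :=
  IsTree.of_subsingleton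

lemma inducesTree_univ_iff : InducesTree G Set.univ ↔ G.IsTree :=
  (induceUnivIso G).isTree_iff

lemma SimpleGraph.IsTree.exists_inducesTree_compl_singleton [Finite V] [Nontrivial V]
    (h : G.IsTree) : ∃ v, InducesTree G {v}ᶜ := by
  obtain ⟨v, hv⟩ := h.connected.exists_connected_induce_compl_singleton_of_finite_nontrivial
  exact ⟨v, hv, h.isAcyclic.induce _⟩

lemma unimodalOn_indicator_one {S : Set V} (hS : InducesTree G S) :
    UnimodalOn G (S.indicator 1) := by
  intro c hc
  by_cases hc1 : c ≤ 1
  · right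
    convert hS using 1
    ext v
    by_cases hv : v ∈ S <;> simp [hv, hc1, hc.not_ge]
  · left
    ext v
    by_cases hv : v ∈ S <;> simp [hv, not_le.mp hc1, hc.ne']

namespace UnimodalOn

variable {f : V → NNReal}

lemma inducesTree_setOf_le (hf : UnimodalOn G f) {c : NNReal} (hc : 0 < c)
    (hne : ∃ v, c ≤ f v) : InducesTree G {v | c ≤ f v} :=
  (hf c hc).resolve_left fun h => by
    obtain ⟨v, hv⟩ := hne
    exact h.subset hv

lemma inducesTree_setOf_lt [Finite V] (hf : UnimodalOn G f) {t : NNReal}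
    (hne : ∃ v, t < f v) : InducesTree G {v | t < f v} := by
  obtain ⟨w, hw : t < f w, hmin⟩ := Set.exists_min_image {v | t < f v} f (Set.toFinite _) hne
  have hset : {v | t < f v} = {v | f w ≤ f v} :=
    Set.ext fun v => ⟨fun hv => hmin _ hv, lt_of_lt_of_le hw⟩
  rw [hset]
  exact hf.inducesTree_setOf_le (pos_of_gt hw) ⟨w, le_rfl⟩

end UnimodalOn

lemma exists_inducesTree_and_compl_of_unimodalOn [Finite V] [Nontrivial V]
    {f₁ f₂ : V → NNReal} (h₁ : UnimodalOn G f₁) (h₂ : UnimodalOn G f₂)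
    (hsum : ∀ v, f₁ v + f₂ v = 1) : ∃ S : Set V, InducesTree G S ∧ InducesTree G Sᶜ := by
  obtain ⟨w, hw⟩ := Finite.exists_max f₁
  by_cases hlt : ∃ v, f₁ v < f₁ w
  · have hlt_iff : ∀ v, f₁ v < f₁ w ↔ f₂ w < f₂ v := fun v =>
      lt_iff_lt_of_add_eq_add ((hsum v).trans (hsum w).symm)
    obtain ⟨v, hv⟩ := hlt
    refine ⟨{v | f₁ w ≤ f₁ v}, h₁.inducesTree_setOf_le (pos_of_gt hv) ⟨w, le_rfl⟩, ?_⟩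
    have hset : {v | f₁ w ≤ f₁ v}ᶜ = {v | f₂ w < f₂ v} :=
      Set.ext fun u => not_le.trans (hlt_iff u)
    rw [hset]
    exact h₂.inducesTree_setOf_lt ⟨v, (hlt_iff v).mp hv⟩
  · simp only [not_exists, not_lt] at hlt
    have hconst : ∀ v, f₁ v = f₁ w := fun v => (hw v).antisymm (hlt v)
    have htree : G.IsTree := by
      rw [← inducesTree_univ_iff]
      rcases eq_zero_or_pos (f₁ w) with h0 | hpos
      · have hf₂ : ∀ v, f₂ v = 1 := fun v => by simpa [hconst v, h0] using hsum v
        simpa [hf₂] using h₂.inducesTree_setOf_le one_pos ⟨w, (hf₂ w).ge⟩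
      · simpa [hconst] using h₁.inducesTree_setOf_le hpos ⟨w, le_rfl⟩
    obtain ⟨u, hu⟩ := htree.exists_inducesTree_compl_singleton
    exact ⟨{u}, inducesTree_singleton u, hu⟩

end

/-- On a finite graph with at least two vertices, the constant function `1` has a
unimodal decomposition into two summands iff the vertex set can be partitioned into two
disjoint subsets each inducing a tree. -/
theorem one_decomposes_into_two_unimodal_iff_partition_into_two_trees
    {V : Type*} [Fintype V] (G : SimpleGraph V) (h2 : 2 ≤ Fintype.card V) :
    (∃ f₁ f₂ : V → NNReal, UnimodalOn G f₁ ∧ UnimodalOn G f₂ ∧ ∀ v, f₁ v + f₂ v = 1) ↔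
      ∃ V₁ V₂ : Set V, Disjoint V₁ V₂ ∧ V₁ ∪ V₂ = Set.univ ∧
        InducesTree G V₁ ∧ InducesTree G V₂ := by
  constructor
  · rintro ⟨f₁, f₂, h₁, h₂, hsum⟩
    have : Nontrivial V := Fintype.one_lt_card_iff_nontrivial.mp h2
    obtain ⟨S, hS, hSc⟩ := exists_inducesTree_and_compl_of_unimodalOn h₁ h₂ hsum
    exact ⟨S, Sᶜ, disjoint_compl_right, Set.union_compl_self S, hS, hSc⟩
  · rintro ⟨V₁, V₂, hdisj, hunion, h₁, h₂⟩
    have hV₂ : V₁ᶜ = V₂ := (IsCompl.of_eq hdisj.eq_bot hunion).compl_eq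
    subst hV₂
    exact ⟨V₁.indicator 1, V₁ᶜ.indicator 1, unimodalOn_indicator_one h₁,
      unimodalOn_indicator_one h₂, fun v => Set.indicator_self_add_compl_apply V₁ 1 v⟩
end

section
/- Let G = (V, E) be a finite simple graph with girth greater than 4 (that is, G contains no cycles of length 3 or 4), let G̃ be its subdivision graph, and let f̃ be the associated function. If G has a vertex cover consisting of k vertices, then there exist k unimodal functions f_1, …, f_k on G̃ with Σ_{i=1}^{k} f_i(x) = f̃(x) for every vertex x of G̃, such that the family f_1, …, f_k is strongly unimodal. -/
/-!
Enumerate the cover as `s₁, …, sₖ` and assign every edge to a cover vertex on it. The `i`-th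
function is `deg sᵢ` at `sᵢ`, and `1` at the midpoints of the edges assigned to `sᵢ` and at
those endpoints of these edges that lie outside the cover. Its positive superlevel sets are
empty, `{sᵢ}`, or a star of depth two around `sᵢ`, hence trees. Two different functions are
both positive only at vertices outside the cover adjacent to both `sᵢ` and `sⱼ`; two such
vertices would close a 4-cycle, so an intersection of superlevel sets of two or more functions
has at most one point. The sum is `f̃`: a cover vertex gets its degree from its own function, a
midpoint gets `1` from its assigned endpoint, and a vertex outside the cover gets `1` from each
of its neighbours, which all lie in the cover.
-/

open SimpleGraph

/-- The subdivision graph of `G`: one new midpoint vertex on each edge of `G`,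
adjacent exactly to the two endpoints of that edge. -/
def subdivGraph {V : Type*} (G : SimpleGraph V) : SimpleGraph (V ⊕ G.edgeSet) where
  Adj x y :=
    match x, y with
    | Sum.inl v, Sum.inr e => v ∈ (e : Sym2 V)
    | Sum.inr e, Sum.inl v => v ∈ (e : Sym2 V)
    | _, _ => False
  symm := by
    constructor
    rintro (v | e) (w | e2) h
    · exact h.elim
    · exact h
    · exact h
    · exact h.elim
  loopless := by
    constructor
    rintro (v | e) h
    · exact h.elim
    · exact h.elim

/-- The canonical function on the subdivision graph: the degree on original vertices,
and `1` on midpoint vertices. -/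
def ftilde {V : Type*} [Fintype V] (G : SimpleGraph V) [DecidableRel G.Adj] :
    V ⊕ G.edgeSet → NNReal
  | Sum.inl v => (G.degree v : NNReal)
  | Sum.inr _ => 1

/-- A strongly unimodal family: each member is unimodal and every finite intersection of
positive superlevel sets is empty or induces a tree. -/
def StronglyUnimodal {V : Type*} (G : SimpleGraph V) {k : ℕ} (f : Fin k → V → NNReal) : Prop :=
  (∀ i, UnimodalOn G (f i)) ∧
  ∀ I : Finset (Fin k), I.Nonempty → ∀ c : Fin k → NNReal, (∀ i ∈ I, 0 < c i) →
    (⋂ i ∈ I, {v | c i ≤ f i v}) = ∅ ∨ InducesTree G (⋂ i ∈ I, {v | c i ≤ f i v})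

open Function

namespace SimpleGraph

variable {V : Type*} {G : SimpleGraph V}

theorem isTree_of_rank {H : SimpleGraph V} (r : V) (ρ : V → ℕ)
    (hne : ∀ ⦃a b⦄, H.Adj a b → ρ a ≠ ρ b)
    (hlow : ∀ v, v ≠ r → ∃ u, H.Adj v u ∧ ρ u < ρ v)
    (huniq : ∀ ⦃v a b⦄, H.Adj v a → H.Adj v b → ρ a < ρ v → ρ b < ρ v → a = b) :
    H.IsTree := by
  classical
  have reach : ∀ v, H.Reachable v r := by
    intro v
    induction h : ρ v using Nat.strong_induction_on generalizing v with
    | _ n ih =>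
      by_cases hv : v = r
      · exact hv ▸ Reachable.refl v
      · obtain ⟨u, huv, hlt⟩ := hlow v hv
        exact huv.reachable.trans (ih _ (h ▸ hlt) u rfl)
  have : Nonempty V := ⟨r⟩
  refine ⟨⟨fun u v => (reach u).trans (reach v).symm⟩, fun x c hc => ?_⟩
  -- a vertex of maximal rank on a cycle would have two distinct lower neighbours
  obtain ⟨w, hw, hmax⟩ := c.support.toFinset.exists_max_image ρ ⟨x, by simp⟩
  rw [List.mem_toFinset] at hw
  set c' := c.rotate w hw
  have hc' : c'.IsCycle := hc.rotate hw
  have lower : ∀ n, H.Adj w (c'.getVert n) → ρ (c'.getVert n) < ρ w := fun n hn =>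
    (hmax _ (List.mem_toFinset.2 ((c.mem_support_rotate_iff w hw).1
      (c'.getVert_mem_support n)))).lt_of_ne (hne hn).symm
  have hsnd := c'.adj_snd hc'.not_nil
  have hpen := (c'.adj_penultimate hc'.not_nil).symm
  exact hc'.snd_ne_penultimate (huniq hsnd hpen (lower _ hsnd) (lower _ hpen))

theorem commonNeighbors_subsingleton
    (h4 : ∀ (v : V) (p : G.Walk v v), p.IsCycle → p.length ≠ 4) {u w : V} (huw : u ≠ w) :
    (G.commonNeighbors u w).Subsingleton := by
  intro x hx y hy
  by_contra hxy
  rw [mem_commonNeighbors] at hx hy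
  let p : G.Walk u u := .cons hx.1 (.cons hx.2.symm (.cons hy.2 (.cons hy.1.symm .nil)))
  have hp : p.IsCycle := by
    simp [p, Walk.cons_isCycle_iff, Walk.cons_isPath_iff, huw, huw.symm, hxy, hx.1.ne, hx.1.ne',
      hy.1.ne, hy.1.ne', hy.2.ne, hx.2.ne']
  exact h4 u p hp (by simp [p])

open Finset in
theorem card_filter_adj_eq_degree [Fintype V] [DecidableRel G.Adj] {ι : Type*} [Fintype ι]
    {s : ι → V} (hs : Injective s) {v : V} (hv : G.neighborSet v ⊆ Set.range s) :
    #{i | G.Adj v (s i)} = G.degree v := by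
  rw [← card_neighborFinset_eq_degree, ← card_map ⟨s, hs⟩]
  congr 1
  ext w
  simp only [mem_map, mem_filter, mem_univ, true_and, Embedding.coeFn_mk, mem_neighborFinset]
  constructor
  · rintro ⟨i, h, rfl⟩
    exact h
  · intro h
    obtain ⟨i, rfl⟩ := hv h
    exact ⟨i, h, rfl⟩

end SimpleGraph

section Unimodal

variable {W : Type*} {G : SimpleGraph W}

theorem inducesTree_of_subsingleton {A : Set W} (hne : A.Nonempty) (hA : A.Subsingleton) :
    InducesTree G A :=
  have : Nonempty A := hne.to_subtype
  have : Subsingleton A := hA.coe_sort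
  .of_subsingleton

theorem inducesTree_of_rank {A : Set W} {r : W} (hr : r ∈ A) (ρ : W → ℕ)
    (hne : ∀ ⦃a b⦄, G.Adj a b → ρ a ≠ ρ b)
    (hlow : ∀ v ∈ A, v ≠ r → ∃ u ∈ A, G.Adj v u ∧ ρ u < ρ v)
    (huniq : ∀ v ∈ A, ∀ a ∈ A, ∀ b ∈ A,
      G.Adj v a → G.Adj v b → ρ a < ρ v → ρ b < ρ v → a = b) :
    InducesTree G A :=
  isTree_of_rank ⟨r, hr⟩ (ρ ∘ (↑)) (fun _ _ h => hne h)
    (fun v hv =>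
      let ⟨u, hu, hvu, hlt⟩ := hlow v v.2 fun h => hv (Subtype.ext h)
      ⟨⟨u, hu⟩, hvu, hlt⟩)
    (fun v a b hva hvb ha hb => Subtype.ext (huniq v v.2 a a.2 b b.2 hva hvb ha hb))

theorem unimodalOn_update_indicator [DecidableEq W] {r : W} {d : NNReal} {T : Set W}
    (hT : InducesTree G (insert r T)) (hd : T.Nonempty → 1 ≤ d) :
    UnimodalOn G (update (T.indicator 1) r d) := by
  intro c hc
  have mem : ∀ x, c ≤ update (T.indicator 1) r d x ↔
      x = r ∧ c ≤ d ∨ x ≠ r ∧ x ∈ T ∧ c ≤ 1 := by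
    intro x
    rcases eq_or_ne x r with rfl | hx
    · simp
    · by_cases hxT : x ∈ T <;> simp [hx, hxT, hc.ne']
  by_cases h1 : c ≤ 1 <;> by_cases h2 : c ≤ d
  · right
    convert hT using 1
    ext x
    simp only [Set.mem_ofPred_eq, mem, Set.mem_insert_iff, h1, h2]
    tauto
  · left
    ext x
    simp only [Set.mem_ofPred_eq, mem, h2, Set.mem_empty_iff_false, iff_false]
    exact fun h => h2 (h1.trans (hd ⟨x, h.resolve_left (by simp) |>.2.1⟩))
  · right
    refine inducesTree_of_subsingleton ⟨r, by simp [mem, h2]⟩ fun x hx y hy => ?_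
    simp only [Set.mem_ofPred_eq, mem, h1, h2, and_true, and_false, or_false] at hx hy
    exact hx.trans hy.symm
  · left
    ext x
    simp [mem, h1, h2]

theorem stronglyUnimodal_of_pairwise_subsingleton_support {k : ℕ} {f : Fin k → W → NNReal}
    (hf : ∀ i, UnimodalOn G (f i))
    (hsupp : Pairwise fun i j => (support (f i) ∩ support (f j)).Subsingleton) :
    StronglyUnimodal G f := by
  refine ⟨hf, fun I ⟨i, hi⟩ c hc => ?_⟩
  by_cases hIi : ∃ j ∈ I, j ≠ i
  · obtain ⟨j, hj, hji⟩ := hIi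
    have hsub : (⋂ l ∈ I, {x | c l ≤ f l x}) ⊆ support (f i) ∩ support (f j) := fun x hx => by
      simp only [Set.mem_iInter₂, Set.mem_ofPred_eq] at hx
      exact ⟨((hc i hi).trans_le (hx i hi)).ne', ((hc j hj).trans_le (hx j hj)).ne'⟩
    rcases Set.eq_empty_or_nonempty (⋂ l ∈ I, {x | c l ≤ f l x}) with he | hne
    · exact .inl he
    · exact .inr (inducesTree_of_subsingleton hne ((hsupp hji.symm).anti hsub))
  · push Not at hIi
    obtain rfl : I = {i} := Finset.eq_singleton_iff_unique_mem.2 ⟨hi, hIi⟩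
    simpa using hf i (c i) (hc i (Finset.mem_singleton_self i))

end Unimodal

section Subdivision

variable {V : Type*} {G : SimpleGraph V}

@[simp] theorem subdivGraph_adj_inl_inr {v : V} {e : G.edgeSet} :
    (subdivGraph G).Adj (.inl v) (.inr e) ↔ v ∈ (e : Sym2 V) := Iff.rfl

@[simp] theorem subdivGraph_adj_inr_inl {v : V} {e : G.edgeSet} :
    (subdivGraph G).Adj (.inr e) (.inl v) ↔ v ∈ (e : Sym2 V) := Iff.rfl

@[simp] theorem subdivGraph_not_adj_inl_inl {v w : V} :
    ¬ (subdivGraph G).Adj (.inl v) (.inl w) := id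

@[simp] theorem subdivGraph_not_adj_inr_inr {e e' : G.edgeSet} :
    ¬ (subdivGraph G).Adj (.inr e) (.inr e') := id

variable {ι : Type*} {s : ι → V} {a : G.edgeSet → ι}

theorem neighborSet_subset_range_of_assign (ha : ∀ e : G.edgeSet, s (a e) ∈ (e : Sym2 V))
    {v : V} (hv : v ∉ Set.range s) : G.neighborSet v ⊆ Set.range s := by
  intro w hvw
  have := ha ⟨s(v, w), G.mem_edgeSet.2 hvw⟩
  rw [Sym2.mem_iff] at this
  exact ⟨a _, this.resolve_left fun h => hv ⟨_, h⟩⟩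

theorem assign_eq_of_adj (hs : Injective s) (ha : ∀ e : G.edgeSet, s (a e) ∈ (e : Sym2 V))
    {v : V} (hv : v ∉ Set.range s) {i : ι} (h : G.Adj v (s i)) :
    a ⟨s(v, s i), G.mem_edgeSet.2 h⟩ = i := by
  have := ha ⟨s(v, s i), G.mem_edgeSet.2 h⟩
  rw [Sym2.mem_iff] at this
  exact hs (this.resolve_left fun h => hv ⟨_, h⟩)

theorem edge_eq_of_assign (ha : ∀ e : G.edgeSet, s (a e) ∈ (e : Sym2 V)) {v : V}
    (hv : v ∉ Set.range s) {e : G.edgeSet} (hve : v ∈ (e : Sym2 V)) :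
    (e : Sym2 V) = s(v, s (a e)) :=
  (Sym2.mem_and_mem_iff fun h => hv ⟨_, h.symm⟩).1 ⟨hve, ha e⟩

variable (G) in
def coverStar (s : ι → V) (a : G.edgeSet → ι) (i : ι) : Set (V ⊕ G.edgeSet) :=
  {x | Sum.elim (fun v => v ∉ Set.range s ∧ G.Adj v (s i)) (fun e => a e = i) x}

@[simp] theorem inl_mem_coverStar {i : ι} {v : V} :
    .inl v ∈ coverStar G s a i ↔ v ∉ Set.range s ∧ G.Adj v (s i) := Iff.rfl

@[simp] theorem inr_mem_coverStar {i : ι} {e : G.edgeSet} :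
    .inr e ∈ coverStar G s a i ↔ a e = i := Iff.rfl

theorem inducesTree_insert_coverStar (hs : Injective s)
    (ha : ∀ e : G.edgeSet, s (a e) ∈ (e : Sym2 V)) (i : ι) :
    InducesTree (subdivGraph G) (insert (.inl (s i)) (coverStar G s a i)) := by
  classical
  refine inducesTree_of_rank (Set.mem_insert _ _)
    (Sum.elim (fun v => if v = s i then 0 else 2) (fun _ => 1)) ?_ ?_ ?_
  · rintro (v | e) (w | e') h <;>
      simp only [subdivGraph_not_adj_inl_inl, subdivGraph_not_adj_inr_inr, Sum.elim_inl,
        Sum.elim_inr] at h ⊢ <;>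
      split_ifs <;> decide
  · rintro (v | e) hx hxr
    · obtain ⟨hv, hvi⟩ : v ∉ Set.range s ∧ G.Adj v (s i) := by simpa [hxr] using hx
      refine ⟨.inr ⟨s(v, s i), G.mem_edgeSet.2 hvi⟩, .inr (assign_eq_of_adj hs ha hv hvi),
        by simp, ?_⟩
      simp [hvi.ne]
    · have hi : a e = i := by simpa using hx
      exact ⟨_, Set.mem_insert _ _, hi ▸ ha e, by simp⟩
  · rintro (v | e) hx (w₁ | e₁) hx₁ (w₂ | e₂) hx₂ h₁ h₂ hr₁ hr₂ <;>
      simp only [subdivGraph_adj_inl_inr, subdivGraph_adj_inr_inl, subdivGraph_not_adj_inl_inl,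
        subdivGraph_not_adj_inr_inr] at h₁ h₂
    · have hvi : v ≠ s i := by rintro rfl; simp at hr₁
      obtain ⟨hv, -⟩ : v ∉ Set.range s ∧ G.Adj v (s i) := by simpa [hvi] using hx
      have hi₁ : a e₁ = i := by simpa using hx₁
      have hi₂ : a e₂ = i := by simpa using hx₂
      rw [Sum.inr.injEq, Subtype.ext_iff, edge_eq_of_assign ha hv h₁,
        edge_eq_of_assign ha hv h₂, hi₁, hi₂]
    · have hw₁ : w₁ = s i := by by_contra h; simp [h] at hr₁
      have hw₂ : w₂ = s i := by by_contra h; simp [h] at hr₂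
      rw [hw₁, hw₂]

theorem one_le_degree_of_coverStar_nonempty [Fintype V] [DecidableRel G.Adj]
    (ha : ∀ e : G.edgeSet, s (a e) ∈ (e : Sym2 V)) {i : ι} (h : (coverStar G s a i).Nonempty) :
    1 ≤ G.degree (s i) := by
  obtain ⟨v | e, hx⟩ := h
  · exact (G.degree_pos_iff_exists_adj _).2 ⟨v, (inl_mem_coverStar.1 hx).2.symm⟩
  · have hi : s i ∈ (e : Sym2 V) := inr_mem_coverStar.1 hx ▸ ha e
    refine (G.degree_pos_iff_exists_adj _).2 ⟨Sym2.Mem.other hi, G.mem_edgeSet.1 ?_⟩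
    rw [Sym2.other_spec hi]
    exact e.2

variable [Fintype V] [DecidableEq V] [DecidableRel G.Adj]

variable (G) in
noncomputable def coverPiece (s : ι → V) (a : G.edgeSet → ι) (i : ι) : V ⊕ G.edgeSet → NNReal :=
  update ((coverStar G s a i).indicator 1) (.inl (s i)) (G.degree (s i))

theorem unimodalOn_coverPiece (hs : Injective s)
    (ha : ∀ e : G.edgeSet, s (a e) ∈ (e : Sym2 V)) (i : ι) :
    UnimodalOn (subdivGraph G) (coverPiece G s a i) :=
  unimodalOn_update_indicator (inducesTree_insert_coverStar hs ha i)
    fun h => by exact_mod_cast one_le_degree_of_coverStar_nonempty ha h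

theorem pairwise_subsingleton_support_coverPiece
    (h4 : ∀ (v : V) (p : G.Walk v v), p.IsCycle → p.length ≠ 4) (hs : Injective s) :
    Pairwise fun i j =>
      (support (coverPiece G s a i) ∩ support (coverPiece G s a j)).Subsingleton := by
  intro i j hij
  have supp : ∀ l, support (coverPiece G s a l) ⊆ insert (.inl (s l)) (coverStar G s a l) :=
    fun l x hx => by
      by_contra h
      rw [Set.mem_insert_iff, not_or] at h
      exact hx (by simp [coverPiece, update_of_ne h.1, h.2])
  refine ((commonNeighbors_subsingleton h4 (hs.ne hij)).image Sum.inl).anti ?_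
  rintro (v | e) ⟨hi, hj⟩
  · replace hi := supp i hi
    replace hj := supp j hj
    simp only [Set.mem_insert_iff, Sum.inl.injEq, inl_mem_coverStar] at hi hj
    rcases hi with rfl | ⟨hv, hvi⟩
    · rcases hj with hj | ⟨hv, -⟩
      · exact absurd (hs hj) hij
      · exact absurd ⟨i, rfl⟩ hv
    · rcases hj with rfl | ⟨-, hvj⟩
      · exact absurd ⟨j, rfl⟩ hv
      · exact ⟨v, ⟨hvi.symm, hvj.symm⟩, rfl⟩
  · have hi := supp i hi
    have hj := supp j hj
    simp only [Set.mem_insert_iff, reduceCtorEq, inr_mem_coverStar, false_or] at hi hj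
    exact absurd (hi.symm.trans hj) hij

theorem coverPiece_inr [DecidableEq ι] (i : ι) (e : G.edgeSet) :
    coverPiece G s a i (.inr e) = if a e = i then 1 else 0 := by
  simp [coverPiece, Set.indicator]

theorem coverPiece_inl_cover [DecidableEq ι] (hs : Injective s) (i j : ι) :
    coverPiece G s a i (.inl (s j)) = if j = i then (G.degree (s j) : NNReal) else 0 := by
  split_ifs with h
  · subst h
    simp [coverPiece]
  · simp [coverPiece, hs.ne h]

theorem coverPiece_inl_of_notMem_range {v : V} (hv : v ∉ Set.range s) (i : ι) :
    coverPiece G s a i (.inl v) = if G.Adj v (s i) then 1 else 0 := by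
  have hvi : v ≠ s i := fun h => hv ⟨i, h.symm⟩
  simp [coverPiece, hvi, Set.indicator, hv]

theorem sum_coverPiece [Fintype ι] [DecidableEq ι] (hs : Injective s)
    (ha : ∀ e : G.edgeSet, s (a e) ∈ (e : Sym2 V)) (x : V ⊕ G.edgeSet) :
    ∑ i, coverPiece G s a i x = ftilde G x := by
  rcases x with v | e
  · by_cases hv : v ∈ Set.range s
    · obtain ⟨j, rfl⟩ := hv
      simp [coverPiece_inl_cover hs, ftilde]
    · simp only [coverPiece_inl_of_notMem_range hv, Finset.sum_boole, ftilde]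
      rw [card_filter_adj_eq_degree hs (neighborSet_subset_range_of_assign ha hv)]
  · simp [coverPiece_inr, ftilde]

end Subdivision

/-- If `G` has girth greater than `4` (every cycle has length at least `5`) and a vertex
cover of `k` vertices, then the canonical function on the subdivision graph of `G` has a
strongly unimodal decomposition into `k` components. -/
theorem vertexCover_imp_strongly_unimodal_decomposition
    {V : Type*} [Fintype V] [DecidableEq V] (G : SimpleGraph V) [DecidableRel G.Adj]
    (hgirth : ∀ (v : V) (p : G.Walk v v), p.IsCycle → 4 < p.length)
    (k : ℕ) (S : Finset V)
    (hcov : ∀ u w, G.Adj u w → u ∈ S ∨ w ∈ S) (hcard : S.card = k) :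
    ∃ f : Fin k → (V ⊕ G.edgeSet) → NNReal,
      (∀ i, UnimodalOn (subdivGraph G) (f i)) ∧
      (∀ x, ∑ i, f i x = ftilde G x) ∧
      StronglyUnimodal (subdivGraph G) f := by
  obtain ⟨s, hs, hS⟩ : ∃ s : Fin k → V, Injective s ∧ ∀ v ∈ S, v ∈ Set.range s :=
    let e := S.equivFin.trans (finCongr hcard)
    ⟨(↑) ∘ e.symm, Subtype.val_injective.comp e.symm.injective, fun v hv => ⟨e ⟨v, hv⟩, by simp⟩⟩
  have : ∀ e : G.edgeSet, ∃ i, s i ∈ (e : Sym2 V) := by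
    rintro ⟨e, he⟩
    induction e using Sym2.ind with
    | _ u w =>
      rcases hcov u w he with h | h
      · obtain ⟨i, rfl⟩ := hS u h
        exact ⟨i, Sym2.mem_mk_left _ _⟩
      · obtain ⟨i, rfl⟩ := hS w h
        exact ⟨i, Sym2.mem_mk_right _ _⟩
  choose a ha using this
  have hf := unimodalOn_coverPiece hs ha
  exact ⟨coverPiece G s a, hf, sum_coverPiece hs ha,
    stronglyUnimodal_of_pairwise_subsingleton_support hf
      (pairwise_subsingleton_support_coverPiece (fun v p hp => (hgirth v p hp).ne') hs)⟩
end
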